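/- Let G be a finite connected simple graph on n ≥ 5 vertices whose complement Ḡ is also connected. Then n(n−1)(n−4)/8 ≤ C(G) + C(Ḡ) < n(n−1)(n−4)/4, where the lower bound is attained with equality if and only if G and Ḡ have the same number of edges and both G and Ḡ are electrically-edge-equivalent. -/

import Mathlib

open Matrix Finset

/-- The Moore–Penrose pseudoinverse of a real square matrix, specified (when it exists)
by the four Penrose conditions. -/
noncomputable def pinv {n : Type*} [Fintype n] [DecidableEq n] (A : Matrix n n ℝ) :
    Matrix n n ℝ :=
  open scoped Classical in
  if h : ∃ B, A * B * A = A ∧ B * A * B = B ∧ (A * B)ᵀ = A * B ∧ (B * A)ᵀ = B * A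
  then h.choose else 0

/-- The resistance distance between two vertices of a graph:
`Ω_G(i,j) = (e_i − e_j)ᵀ L⁺ (e_i − e_j)` where `L⁺` is the Moore–Penrose pseudoinverse
of the Laplacian matrix of `G`. -/
noncomputable def resDist {V : Type*} [Fintype V] [DecidableEq V] (G : SimpleGraph V)
    (i j : V) : ℝ :=
  letI : DecidableRel G.Adj := Classical.decRel _
  (Pi.single i 1 - Pi.single j 1) ⬝ᵥ
    (pinv (G.lapMatrix ℝ)) *ᵥ (Pi.single i 1 - Pi.single j 1)

lemma resDist_comm {V : Type*} [Fintype V] [DecidableEq V] (G : SimpleGraph V) (i j : V) :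
    resDist G i j = resDist G j i := by
  unfold resDist
  rw [show (Pi.single j 1 - Pi.single i 1 : V → ℝ)
        = -(Pi.single i 1 - Pi.single j 1) by rw [neg_sub]]
  rw [Matrix.mulVec_neg, dotProduct_neg, neg_dotProduct, neg_neg]

/-- The global cyclicity index `C(G) = Σ_{ij ∈ E(G)} (1/Ω_G(i,j) − 1)`,
the sum over all edges of `G`. -/
noncomputable def cyclicity {V : Type*} [Fintype V] [DecidableEq V] (G : SimpleGraph V) : ℝ :=
  letI : DecidableRel G.Adj := Classical.decRel _
  ∑ e ∈ G.edgeFinset,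
    Sym2.lift ⟨fun i j => 1 / resDist G i j - 1,
      fun i j => by simp only []; rw [resDist_comm G i j]⟩ e

/-- A connected graph is electrically-edge-equivalent if all resistance distances
between pairs of adjacent vertices are equal. -/
def ElecEdgeEquiv {V : Type*} [Fintype V] [DecidableEq V] (G : SimpleGraph V) : Prop :=
  ∀ u v x y : V, G.Adj u v → G.Adj x y → resDist G u v = resDist G x y

/-!
For connected `G` the pseudoinverse of the Laplacian is `L⁺ = (L + J/n)⁻¹ - J/n`, so
`L L⁺ = 1 - J/n`. This gives Foster's theorem `∑_{ij ∈ E} Ω(i,j) = n - 1`, and Cauchy–Schwarz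
over the `m` edges gives `m² ≤ (n - 1)(C(G) + m)`, with equality iff all edge resistances
coincide. As `m + m̄ = n(n - 1)/2`, adding this inequality for `G` and `Ḡ` yields the lower bound,
with equality iff `m = m̄` and both graphs are electrically-edge-equivalent.

For the upper bound, every edge resistance lies in `[2/(n - 1), 1]`: it is at most `1` because
the edge alone carries energy `Ω²` of the total energy `Ω` of the unit current, and at least
`2/(n - 1)` by Thomson's principle applied to `e_i - e_j`, since `Ḡ` connected forces every degree
to be at most `n - 2`. Bounding `1/Ω` by its chord over this interval and using Foster's theorem
again gives `C(G) ≤ (n - 1)(m - (n - 1))/2`, whence `C(G) + C(Ḡ) ≤ (n - 1)²(n - 4)/4`.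
-/

theorem two_mul_sum_inv_mul_sum_sub_sq_card {ι : Type*} (s : Finset ι) {w : ι → ℝ}
    (hw : ∀ a ∈ s, w a ≠ 0) :
    2 * ((∑ a ∈ s, 1 / w a) * (∑ a ∈ s, w a) - (#s : ℝ) ^ 2)
      = ∑ a ∈ s, ∑ b ∈ s, (w a - w b) ^ 2 / (w a * w b) := by
  have hterm : ∀ a ∈ s, ∀ b ∈ s,
      (w a - w b) ^ 2 / (w a * w b) = w a * (1 / w b) + w b * (1 / w a) - 2 := by
    intro a ha b hb
    field_simp [hw a ha, hw b hb]
    ring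
  rw [Finset.sum_congr rfl fun a ha => Finset.sum_congr rfl (hterm a ha)]
  simp only [Finset.sum_sub_distrib, Finset.sum_add_distrib, ← Finset.mul_sum, ← Finset.sum_mul,
    Finset.sum_const, nsmul_eq_mul]
  ring

theorem sq_card_le_sum_inv_mul_sum {ι : Type*} (s : Finset ι) {w : ι → ℝ}
    (hw : ∀ a ∈ s, 0 < w a) : (#s : ℝ) ^ 2 ≤ (∑ a ∈ s, 1 / w a) * (∑ a ∈ s, w a) := by
  have h := two_mul_sum_inv_mul_sum_sub_sq_card s fun a ha => (hw a ha).ne'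
  have : 0 ≤ ∑ a ∈ s, ∑ b ∈ s, (w a - w b) ^ 2 / (w a * w b) :=
    Finset.sum_nonneg fun a ha => Finset.sum_nonneg fun b hb =>
      div_nonneg (sq_nonneg _) (mul_pos (hw a ha) (hw b hb)).le
  linarith

theorem sq_card_eq_sum_inv_mul_sum_iff {ι : Type*} (s : Finset ι) {w : ι → ℝ}
    (hw : ∀ a ∈ s, 0 < w a) :
    (#s : ℝ) ^ 2 = (∑ a ∈ s, 1 / w a) * (∑ a ∈ s, w a) ↔ ∀ a ∈ s, ∀ b ∈ s, w a = w b := by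
  have h := two_mul_sum_inv_mul_sum_sub_sq_card s fun a ha => (hw a ha).ne'
  have hnn : ∀ a ∈ s, ∀ b ∈ s, 0 ≤ (w a - w b) ^ 2 / (w a * w b) := fun a ha b hb =>
    div_nonneg (sq_nonneg _) (mul_pos (hw a ha) (hw b hb)).le
  rw [eq_comm, ← sub_eq_zero, ← mul_eq_zero_iff_left two_ne_zero, h,
    Finset.sum_eq_zero_iff_of_nonneg fun a ha => Finset.sum_nonneg (hnn a ha)]
  refine forall₂_congr fun a ha => ?_
  rw [Finset.sum_eq_zero_iff_of_nonneg (hnn a ha)]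
  refine forall₂_congr fun b hb => ?_
  rw [div_eq_zero_iff, or_iff_left (mul_pos (hw a ha) (hw b hb)).ne', sq_eq_zero_iff, sub_eq_zero]

theorem inv_le_inv_add_inv_sub_div_mul {a b x : ℝ} (ha : 0 < a) (hax : a ≤ x) (hxb : x ≤ b) :
    x⁻¹ ≤ a⁻¹ + b⁻¹ - x / (a * b) := by
  have hx : 0 < x := ha.trans_le hax
  have hb : 0 < b := hx.trans_le hxb
  rw [inv_le_iff_one_le_mul₀ hx, mul_comm]
  have : 0 ≤ (x - a) * (b - x) / (a * b) := div_nonneg (by nlinarith) (by positivity)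
  calc 1 ≤ 1 + (x - a) * (b - x) / (a * b) := by linarith
    _ = x * (a⁻¹ + b⁻¹ - x / (a * b)) := by field_simp; ring

theorem pinv_eq_of_penrose {n : Type*} [Fintype n] [DecidableEq n] {A B : Matrix n n ℝ}
    (h : A * B * A = A ∧ B * A * B = B ∧ (A * B)ᵀ = A * B ∧ (B * A)ᵀ = B * A) :
    pinv A = B := by
  have hex : ∃ B, A * B * A = A ∧ B * A * B = B ∧ (A * B)ᵀ = A * B ∧ (B * A)ᵀ = B * A :=
    ⟨B, h⟩
  rw [pinv, dif_pos hex]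
  obtain ⟨a₁, b₁, c₁, d₁⟩ := hex.choose_spec
  obtain ⟨a₂, b₂, c₂, d₂⟩ := h
  set C := hex.choose
  have hAC : A * C = A * B := by
    calc A * C = (A * B * A * C)ᵀ := by rw [a₂, c₁]
      _ = (A * C)ᵀ * (A * B)ᵀ := by rw [← transpose_mul, Matrix.mul_assoc, Matrix.mul_assoc]
      _ = A * B := by rw [c₁, c₂, ← Matrix.mul_assoc, a₁]
  have hCA : C * A = B * A := by
    calc C * A = (C * (A * B * A))ᵀ := by rw [a₂, d₁]
      _ = (B * A)ᵀ * (C * A)ᵀ := by rw [← transpose_mul]; simp only [Matrix.mul_assoc]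
      _ = B * A := by rw [d₁, d₂, Matrix.mul_assoc, ← Matrix.mul_assoc A, a₁]
  calc C = C * A * C := b₁.symm
    _ = B * A * B := by rw [hCA, Matrix.mul_assoc, hAC, ← Matrix.mul_assoc]
    _ = B := b₂

theorem Matrix.PosSemidef.dotProduct_mulVec_sq_le {n : Type*} [Fintype n] {A : Matrix n n ℝ}
    (hA : A.PosSemidef) (x y : n → ℝ) :
    (x ⬝ᵥ A *ᵥ y) ^ 2 ≤ (x ⬝ᵥ A *ᵥ x) * (y ⬝ᵥ A *ᵥ y) := by
  have hsymm : y ⬝ᵥ A *ᵥ x = x ⬝ᵥ A *ᵥ y := by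
    rw [dotProduct_mulVec, dotProduct_comm, ← mulVec_transpose,
      ← conjTranspose_eq_transpose_of_trivial, hA.isHermitian.eq]
  have hquad : ∀ t : ℝ, 0 ≤ (y ⬝ᵥ A *ᵥ y) * (t * t) + 2 * (x ⬝ᵥ A *ᵥ y) * t + x ⬝ᵥ A *ᵥ x := by
    intro t
    have := hA.dotProduct_mulVec_nonneg (x + t • y)
    simp only [star_trivial, mulVec_add, mulVec_smul, add_dotProduct, dotProduct_add,
      smul_dotProduct, dotProduct_smul, smul_eq_mul, hsymm] at this
    linarith
  have := discrim_le_zero hquad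
  rw [discrim] at this
  nlinarith

theorem mul_pinv_eq_one_sub {n : Type*} [Fintype n] [DecidableEq n] {L K : Matrix n n ℝ}
    (hLK : L * K = 0) (hKL : K * L = 0) (hKK : K * K = K) (hK : Kᵀ = K)
    (hH : IsUnit (L + K).det) : L * pinv L = 1 - K := by
  have hHinvK : (L + K)⁻¹ * K = K := by
    calc (L + K)⁻¹ * K = (L + K)⁻¹ * ((L + K) * K) := by
          rw [Matrix.add_mul, hLK, hKK, zero_add]
      _ = K := by rw [← Matrix.mul_assoc, nonsing_inv_mul _ hH, Matrix.one_mul]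
  have hKHinv : K * (L + K)⁻¹ = K := by
    calc K * (L + K)⁻¹ = (K * (L + K)) * (L + K)⁻¹ := by
          rw [Matrix.mul_add, hKL, hKK, zero_add]
      _ = K := by rw [Matrix.mul_assoc, mul_nonsing_inv _ hH, Matrix.mul_one]
  -- The pseudoinverse is `(L + K)⁻¹ - K`; both of its products with `L` are `1 - K`.
  have hLB : L * ((L + K)⁻¹ - K) = 1 - K := by
    calc L * ((L + K)⁻¹ - K) = ((L + K) - K) * (L + K)⁻¹ - L * K := by
          rw [Matrix.mul_sub, add_sub_cancel_right]
      _ = 1 - K := by rw [Matrix.sub_mul, mul_nonsing_inv _ hH, hKHinv, hLK, sub_zero]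
  have hBL : ((L + K)⁻¹ - K) * L = 1 - K := by
    calc ((L + K)⁻¹ - K) * L = (L + K)⁻¹ * ((L + K) - K) - K * L := by
          rw [Matrix.sub_mul, add_sub_cancel_right]
      _ = 1 - K := by rw [Matrix.mul_sub, nonsing_inv_mul _ hH, hHinvK, hKL, sub_zero]
  have hKB : K * ((L + K)⁻¹ - K) = 0 := by rw [Matrix.mul_sub, hKHinv, hKK, sub_self]
  have hproj : (1 - K)ᵀ = 1 - K := by rw [transpose_sub, transpose_one, hK]
  rw [pinv_eq_of_penrose ⟨?_, ?_, ?_, ?_⟩, hLB]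
  · rw [hLB, Matrix.sub_mul, Matrix.one_mul, hKL, sub_zero]
  · rw [hBL, Matrix.sub_mul, Matrix.one_mul, hKB, sub_zero]
  · rw [hLB, hproj]
  · rw [hBL, hproj]

noncomputable def constProj (V : Type*) [Fintype V] : Matrix V V ℝ :=
  of fun _ _ => (Fintype.card V : ℝ)⁻¹

section Laplacian

variable {V : Type*} [Fintype V]

theorem transpose_constProj : (constProj V)ᵀ = constProj V := rfl

theorem constProj_mulVec (x : V → ℝ) (i : V) :
    (constProj V *ᵥ x) i = (Fintype.card V : ℝ)⁻¹ * ∑ k, x k := by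
  simp [constProj, mulVec, dotProduct, Finset.mul_sum]

theorem constProj_mul_self [Nonempty V] : constProj V * constProj V = constProj V := by
  ext i j
  simp [constProj, mul_apply]

theorem constProj_mulVec_single_sub_single [DecidableEq V] (i j : V) :
    constProj V *ᵥ (Pi.single i 1 - Pi.single j 1) = 0 := by
  ext k
  simp [constProj_mulVec, Finset.sum_sub_distrib]

variable [DecidableEq V] (G : SimpleGraph V) [DecidableRel G.Adj]

theorem lapMatrix_mul_constProj : G.lapMatrix ℝ * constProj V = 0 := by
  ext i j
  have hrow := congrFun (G.lapMatrix_mulVec_const_eq_zero (R := ℝ)) i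
  simp only [mulVec, dotProduct, mul_one, Pi.zero_apply] at hrow
  simp [constProj, mul_apply, ← Finset.sum_mul, hrow]

theorem constProj_mul_lapMatrix : constProj V * G.lapMatrix ℝ = 0 := by
  rw [← transpose_constProj, ← (G.isSymm_lapMatrix (R := ℝ)).eq, ← transpose_mul,
    lapMatrix_mul_constProj, transpose_zero]

theorem isUnit_det_lapMatrix_add_constProj (hG : G.Connected) :
    IsUnit (G.lapMatrix ℝ + constProj V).det := by
  have : Nonempty V := hG.nonempty
  rw [isUnit_iff_ne_zero, Ne, ← exists_mulVec_eq_zero_iff]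
  rintro ⟨v, hv, hHv⟩
  have hKv : constProj V *ᵥ v = 0 := by
    simpa [mulVec_mulVec, Matrix.mul_add, constProj_mul_lapMatrix, constProj_mul_self]
      using congrArg (constProj V *ᵥ ·) hHv
  have hLv : G.lapMatrix ℝ *ᵥ v = 0 := by simpa [add_mulVec, hKv] using hHv
  obtain ⟨i⟩ := ‹Nonempty V›
  have hconst : ∀ k, v k = v i := fun k =>
    G.lapMatrix_mulVec_eq_zero_iff_forall_reachable.mp hLv k i (hG.preconnected k i)
  have hvi : v i = 0 := by
    simpa [constProj_mulVec, hconst] using congrFun hKv i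
  exact hv (funext fun k => by rw [hconst k, hvi, Pi.zero_apply])

theorem lapMatrix_mul_pinv (hG : G.Connected) :
    G.lapMatrix ℝ * pinv (G.lapMatrix ℝ) = 1 - constProj V := by
  have : Nonempty V := hG.nonempty
  exact mul_pinv_eq_one_sub (lapMatrix_mul_constProj G) (constProj_mul_lapMatrix G)
    constProj_mul_self transpose_constProj (isUnit_det_lapMatrix_add_constProj G hG)

end Laplacian

section Resistance

variable {V : Type*} [Fintype V] [DecidableEq V] (G : SimpleGraph V) [DecidableRel G.Adj]

noncomputable def potential (i j : V) : V → ℝ :=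
  pinv (G.lapMatrix ℝ) *ᵥ (Pi.single i 1 - Pi.single j 1)

theorem resDist_eq_dotProduct_potential (i j : V) :
    resDist G i j = (Pi.single i 1 - Pi.single j 1) ⬝ᵥ potential G i j := by
  unfold resDist potential
  -- `resDist` builds the Laplacian from `Classical.decRel`, which agrees with the given instance
  congr!

theorem resDist_eq_potential_sub (i j : V) :
    resDist G i j = potential G i j i - potential G i j j := by
  rw [resDist_eq_dotProduct_potential, sub_dotProduct, single_one_dotProduct,
    single_one_dotProduct]

theorem lapMatrix_mulVec_potential (hG : G.Connected) (i j : V) :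
    G.lapMatrix ℝ *ᵥ potential G i j = Pi.single i 1 - Pi.single j 1 := by
  rw [potential, mulVec_mulVec, lapMatrix_mul_pinv G hG, sub_mulVec, one_mulVec,
    constProj_mulVec_single_sub_single, sub_zero]

theorem resDist_eq_energy (hG : G.Connected) (i j : V) :
    resDist G i j = potential G i j ⬝ᵥ G.lapMatrix ℝ *ᵥ potential G i j := by
  rw [lapMatrix_mulVec_potential G hG, dotProduct_comm, resDist_eq_dotProduct_potential]

theorem resDist_pos (hG : G.Connected) {i j : V} (hij : i ≠ j) : 0 < resDist G i j := by
  have hpsd := G.posSemidef_lapMatrix ℝ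
  have h0 : 0 ≤ potential G i j ⬝ᵥ G.lapMatrix ℝ *ᵥ potential G i j := by
    simpa using hpsd.dotProduct_mulVec_nonneg (potential G i j)
  rw [resDist_eq_energy G hG]
  refine h0.lt_of_ne fun h => ?_
  have hL := (hpsd.dotProduct_mulVec_zero_iff (potential G i j)).mp (by simpa using h.symm)
  rw [lapMatrix_mulVec_potential G hG] at hL
  simpa [hij] using congrFun hL i

theorem sq_sub_le_energy_mul_resDist (hG : G.Connected) (i j : V) (f : V → ℝ) :
    (f i - f j) ^ 2 ≤ (f ⬝ᵥ G.lapMatrix ℝ *ᵥ f) * resDist G i j := by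
  have hf : f ⬝ᵥ G.lapMatrix ℝ *ᵥ potential G i j = f i - f j := by
    rw [lapMatrix_mulVec_potential G hG, dotProduct_sub, dotProduct_single_one,
      dotProduct_single_one]
  rw [← hf, resDist_eq_energy G hG]
  exact (G.posSemidef_lapMatrix ℝ).dotProduct_mulVec_sq_le _ _

theorem sq_sub_le_energy_of_adj {i j : V} (hij : G.Adj i j) (f : V → ℝ) :
    (f i - f j) ^ 2 ≤ f ⬝ᵥ G.lapMatrix ℝ *ᵥ f := by
  rw [← toLinearMap₂'_apply', SimpleGraph.lapMatrix_toLinearMap₂', ← Fintype.sum_prod_type']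
  have hpair := Finset.sum_le_sum_of_subset_of_nonneg (subset_univ {(i, j), (j, i)})
    (fun p _ _ => by positivity : ∀ p ∈ univ, p ∉ _ →
      0 ≤ if G.Adj p.1 p.2 then (f p.1 - f p.2) ^ 2 else 0)
  rw [Finset.sum_pair (by simp [hij.ne])] at hpair
  simp only [hij, hij.symm, if_true] at hpair
  nlinarith [hpair]

theorem resDist_le_one (hG : G.Connected) {i j : V} (hij : G.Adj i j) : resDist G i j ≤ 1 := by
  have h := sq_sub_le_energy_of_adj G hij (potential G i j)
  rw [← resDist_eq_potential_sub, ← resDist_eq_energy G hG] at h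
  nlinarith [resDist_pos G hG hij.ne]

theorem energy_single_sub_single_of_adj {i j : V} (hij : G.Adj i j) :
    (Pi.single i 1 - Pi.single j 1) ⬝ᵥ G.lapMatrix ℝ *ᵥ (Pi.single i 1 - Pi.single j 1)
      = G.degree i + G.degree j + 2 := by
  simp [mulVec_sub, SimpleGraph.lapMatrix, SimpleGraph.degMatrix, hij, hij.symm, hij.ne,
    hij.ne.symm]
  ring

theorem four_div_le_resDist (hG : G.Connected) {i j : V} (hij : G.Adj i j) :
    4 / (G.degree i + G.degree j + 2) ≤ resDist G i j := by
  have h := sq_sub_le_energy_mul_resDist G hG i j (Pi.single i 1 - Pi.single j 1)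
  rw [energy_single_sub_single_of_adj G hij] at h
  rw [div_le_iff₀' (by positivity)]
  simpa [hij.ne, hij.ne.symm, show (1 + 1 : ℝ) ^ 2 = 4 by norm_num] using h

theorem degree_add_two_le_card [Nontrivial V] (hGc : Gᶜ.Connected) (v : V) :
    G.degree v + 2 ≤ Fintype.card V := by
  have hpos := hGc.preconnected.degree_pos_of_nontrivial v
  rw [SimpleGraph.degree_compl] at hpos
  have := G.degree_lt_card_verts v
  omega

theorem two_div_le_resDist (hG : G.Connected) (hGc : Gᶜ.Connected) {i j : V}
    (hij : G.Adj i j) : 2 / ((Fintype.card V : ℝ) - 1) ≤ resDist G i j := by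
  have : Nontrivial V := ⟨i, j, hij.ne⟩
  have hi : (G.degree i : ℝ) + 2 ≤ Fintype.card V := by
    exact_mod_cast degree_add_two_le_card G hGc i
  have hj : (G.degree j : ℝ) + 2 ≤ Fintype.card V := by
    exact_mod_cast degree_add_two_le_card G hGc j
  calc 2 / ((Fintype.card V : ℝ) - 1) = 4 / (2 * (Fintype.card V : ℝ) - 2) := by
        rw [show 2 * (Fintype.card V : ℝ) - 2 = 2 * ((Fintype.card V : ℝ) - 1) by ring,
          ← div_div]
        norm_num
    _ ≤ 4 / (G.degree i + G.degree j + 2) := by gcongr; linarith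
    _ ≤ resDist G i j := four_div_le_resDist G hG hij

theorem sum_adj_sub_eq_lapMatrix_mul_apply (M : Matrix V V ℝ) (a : V) :
    ∑ b, (if G.Adj a b then M a a - M b a else 0) = (G.lapMatrix ℝ * M) a a := by
  rw [SimpleGraph.lapMatrix, Matrix.sub_mul, Matrix.sub_apply, SimpleGraph.degMatrix, diagonal_mul,
    SimpleGraph.adjMatrix_mul_apply, ← Finset.sum_filter, ← SimpleGraph.neighborFinset_eq_filter,
    Finset.sum_sub_distrib, Finset.sum_const, SimpleGraph.card_neighborFinset_eq_degree,
    nsmul_eq_mul]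

theorem resDist_eq_pinv_apply (a b : V) :
    resDist G a b = pinv (G.lapMatrix ℝ) a a - pinv (G.lapMatrix ℝ) b a
      + (pinv (G.lapMatrix ℝ) b b - pinv (G.lapMatrix ℝ) a b) := by
  simp only [resDist_eq_potential_sub, potential, mulVec_sub, mulVec_single_one, Pi.sub_apply,
    col_apply]
  ring

theorem sum_adj_resDist (hG : G.Connected) :
    ∑ a, ∑ b, (if G.Adj a b then resDist G a b else 0) = 2 * ((Fintype.card V : ℝ) - 1) := by
  have : Nonempty V := hG.nonempty
  have hLP := lapMatrix_mul_pinv G hG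
  simp only [resDist_eq_pinv_apply, ite_add_zero, Finset.sum_add_distrib]
  generalize pinv (G.lapMatrix ℝ) = P at hLP ⊢
  have hrow : ∑ a, ∑ b, (if G.Adj a b then P a a - P b a else 0)
      = (Fintype.card V : ℝ) - 1 := by
    simp only [sum_adj_sub_eq_lapMatrix_mul_apply, hLP, Matrix.sub_apply, one_apply_eq,
      constProj, of_apply, Finset.sum_const, Finset.card_univ, nsmul_eq_mul]
    field_simp
  have hcol : ∑ a, ∑ b, (if G.Adj a b then P b b - P a b else 0)
      = (Fintype.card V : ℝ) - 1 := by
    rw [Finset.sum_comm, ← hrow]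
    simp only [G.adj_comm]
  rw [hrow, hcol]
  ring

theorem sum_darts_eq_sum_sum_adj {M : Type*} [AddCommMonoid M] (f : V → V → M) :
    ∑ d : G.Dart, f d.fst d.snd = ∑ a, ∑ b, if G.Adj a b then f a b else 0 := by
  have himage : (univ : Finset G.Dart).image SimpleGraph.Dart.toProd
      = univ.filter fun p : V × V => G.Adj p.1 p.2 := by
    ext ⟨a, b⟩
    simp only [Finset.mem_image, Finset.mem_univ, true_and, Finset.mem_filter]
    exact ⟨by rintro ⟨⟨_, h⟩, rfl⟩; exact h, fun h => ⟨⟨(a, b), h⟩, rfl⟩⟩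
  rw [← Fintype.sum_prod_type', ← Finset.sum_filter, ← himage,
    Finset.sum_image fun d _ d' _ h => SimpleGraph.Dart.ext d d' h]

theorem sum_darts_edge {M : Type*} [AddCommMonoid M] (f : Sym2 V → M) :
    ∑ d : G.Dart, f d.edge = 2 • ∑ e ∈ G.edgeFinset, f e := by
  rw [← Finset.sum_fiberwise_of_maps_to (g := SimpleGraph.Dart.edge) (t := G.edgeFinset)
    fun d _ => SimpleGraph.mem_edgeFinset.mpr d.edge_mem, Finset.smul_sum]
  refine Finset.sum_congr rfl fun e he => ?_
  rw [Finset.sum_congr rfl fun d hd => congrArg f (Finset.mem_filter.mp hd).2, Finset.sum_const,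
    G.dart_edge_fiber_card e (SimpleGraph.mem_edgeFinset.mp he)]

theorem sum_darts_resDist (hG : G.Connected) :
    ∑ d : G.Dart, resDist G d.fst d.snd = 2 * ((Fintype.card V : ℝ) - 1) := by
  rw [sum_darts_eq_sum_sum_adj, sum_adj_resDist G hG]

theorem two_mul_cyclicity_add_card_edgeFinset :
    2 * (cyclicity G + #G.edgeFinset) = ∑ d : G.Dart, 1 / resDist G d.fst d.snd := by
  have hC : 2 * cyclicity G = ∑ d : G.Dart, (1 / resDist G d.fst d.snd - 1) := by
    unfold cyclicity
    rw [← Nat.cast_ofNat, ← nsmul_eq_mul, ← sum_darts_edge]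
    congr!
  rw [mul_add, hC, Finset.sum_sub_distrib, Finset.sum_const, Finset.card_univ,
    G.dart_card_eq_twice_card_edges]
  ring

theorem sq_card_darts_sub_sum_mul_sum_eq (hG : G.Connected) :
    (#(univ : Finset G.Dart) : ℝ) ^ 2 - (∑ d : G.Dart, 1 / resDist G d.fst d.snd)
        * (∑ d : G.Dart, resDist G d.fst d.snd)
      = 4 * ((#G.edgeFinset : ℝ) ^ 2
        - ((Fintype.card V : ℝ) - 1) * (cyclicity G + #G.edgeFinset)) := by
  rw [← two_mul_cyclicity_add_card_edgeFinset, sum_darts_resDist G hG, Finset.card_univ,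
    G.dart_card_eq_twice_card_edges]
  push_cast
  ring

theorem sq_card_edgeFinset_le (hG : G.Connected) :
    (#G.edgeFinset : ℝ) ^ 2 ≤ ((Fintype.card V : ℝ) - 1) * (cyclicity G + #G.edgeFinset) := by
  have := sq_card_le_sum_inv_mul_sum univ fun (d : G.Dart) _ => resDist_pos G hG d.fst_ne_snd
  linarith [sq_card_darts_sub_sum_mul_sum_eq G hG]

theorem sq_card_edgeFinset_eq_iff (hG : G.Connected) :
    (#G.edgeFinset : ℝ) ^ 2 = ((Fintype.card V : ℝ) - 1) * (cyclicity G + #G.edgeFinset)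
      ↔ ElecEdgeEquiv G := by
  have hcs := sq_card_eq_sum_inv_mul_sum_iff univ
    fun (d : G.Dart) _ => resDist_pos G hG d.fst_ne_snd
  rw [← sub_eq_zero, ← mul_eq_zero_iff_left four_ne_zero, ← sq_card_darts_sub_sum_mul_sum_eq G hG,
    sub_eq_zero, hcs]
  exact ⟨fun h u v x y huv hxy => h ⟨(u, v), huv⟩ (mem_univ _) ⟨(x, y), hxy⟩ (mem_univ _),
    fun h d _ d' _ => h _ _ _ _ d.adj d'.adj⟩

theorem cyclicity_le (hG : G.Connected) (hGc : Gᶜ.Connected) :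
    cyclicity G
      ≤ ((Fintype.card V : ℝ) - 1) * (#G.edgeFinset - ((Fintype.card V : ℝ) - 1)) / 2 := by
  set k : ℝ := (Fintype.card V : ℝ) - 1
  -- The chord of `x ↦ 1 / x` over `[2 / k, 1]`, which contains every resistance of an edge
  have hchord : ∀ d : G.Dart,
      1 / resDist G d.fst d.snd ≤ k / 2 + 1 - k / 2 * resDist G d.fst d.snd := by
    intro d
    have hk : 0 < k := by
      have : Nontrivial V := ⟨d.fst, d.snd, d.fst_ne_snd⟩
      simpa [k] using Fintype.one_lt_card (α := V)
    have h := inv_le_inv_add_inv_sub_div_mul (by positivity) (two_div_le_resDist G hG hGc d.adj)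
      (resDist_le_one G hG d.adj)
    convert h using 1
    · rw [one_div]
    · field_simp
      simp only [k]
      ring
  have hsum := Finset.sum_le_sum fun d (_ : d ∈ univ) => hchord d
  rw [← two_mul_cyclicity_add_card_edgeFinset, Finset.sum_sub_distrib, ← Finset.mul_sum,
    sum_darts_resDist G hG, Finset.sum_const, Finset.card_univ, G.dart_card_eq_twice_card_edges,
    nsmul_eq_mul] at hsum
  push_cast at hsum
  linarith

theorem card_edgeFinset_add_card_edgeFinset_compl :
    (#G.edgeFinset : ℝ) + #Gᶜ.edgeFinset = Fintype.card V * ((Fintype.card V : ℝ) - 1) / 2 := by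
  have htop : (⊤ : SimpleGraph V).edgeFinset = G.edgeFinset ∪ Gᶜ.edgeFinset := by
    rw [← SimpleGraph.edgeFinset_sup]
    congr!
    exact sup_compl_eq_top.symm
  rw [← Nat.cast_choose_two, ← SimpleGraph.card_edgeFinset_top_eq_card_choose_two, htop,
    Finset.card_union_of_disjoint (SimpleGraph.disjoint_edgeFinset.mpr disjoint_compl_right)]
  push_cast
  ring

end Resistance

theorem bounds_add_of_sq_le_mul_add {N m m' c c' : ℝ} (hN : 5 ≤ N)
    (hm : m + m' = N * (N - 1) / 2)
    (hc : m ^ 2 ≤ (N - 1) * (c + m)) (hc' : m' ^ 2 ≤ (N - 1) * (c' + m'))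
    (hu : c ≤ (N - 1) * (m - (N - 1)) / 2) (hu' : c' ≤ (N - 1) * (m' - (N - 1)) / 2) :
    (N * (N - 1) * (N - 4) / 8 ≤ c + c' ∧ c + c' < N * (N - 1) * (N - 4) / 4) ∧
      (c + c' = N * (N - 1) * (N - 4) / 8 ↔
        m = m' ∧ m ^ 2 = (N - 1) * (c + m) ∧ m' ^ 2 = (N - 1) * (c' + m')) := by
  -- `N - 1` times the defect of the lower bound is the sum of the two Cauchy–Schwarz defects
  -- and `(m - m')² / 2`.
  have key : (c + c' - N * (N - 1) * (N - 4) / 8) * (N - 1)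
      = ((N - 1) * (c + m) - m ^ 2) + ((N - 1) * (c' + m') - m' ^ 2) + (m - m') ^ 2 / 2 := by
    linear_combination ((m + m') / 2 + N * (N - 1) / 4 - (N - 1)) * hm
  have hN1 : 0 < N - 1 := by linarith
  have hsq : 0 ≤ (m - m') ^ 2 / 2 := by positivity
  refine ⟨⟨?_, ?_⟩, ⟨fun h => ?_, fun ⟨hmm, he, he'⟩ => ?_⟩⟩
  · nlinarith
  · nlinarith
  · rw [h, sub_self, zero_mul] at key
    have hmm : (m - m') ^ 2 = 0 := by linarith
    exact ⟨sub_eq_zero.mp (pow_eq_zero_iff two_ne_zero |>.mp hmm), by linarith, by linarith⟩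
  · have hzero : (c + c' - N * (N - 1) * (N - 4) / 8) * (N - 1) = 0 := by
      rw [key, ← he, ← he', hmm]
      ring
    exact sub_eq_zero.mp ((mul_eq_zero.mp hzero).resolve_right hN1.ne')

theorem stmt18 {V : Type*} [Fintype V] [DecidableEq V] (G : SimpleGraph V) [DecidableRel G.Adj]
    (hG : G.Connected) (hGc : Gᶜ.Connected)
    (n : ℕ) (hn : n = Fintype.card V) (h5 : 5 ≤ n) :
    ((n : ℝ) * ((n : ℝ) - 1) * ((n : ℝ) - 4) / 8 ≤ cyclicity G + cyclicity Gᶜ ∧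
      cyclicity G + cyclicity Gᶜ < (n : ℝ) * ((n : ℝ) - 1) * ((n : ℝ) - 4) / 4) ∧
    (cyclicity G + cyclicity Gᶜ = (n : ℝ) * ((n : ℝ) - 1) * ((n : ℝ) - 4) / 8 ↔
      G.edgeFinset.card = Gᶜ.edgeFinset.card ∧ ElecEdgeEquiv G ∧ ElecEdgeEquiv Gᶜ) := by
  have hGcc : Gᶜᶜ.Connected := by rwa [compl_compl]
  subst hn
  have h := bounds_add_of_sq_le_mul_add (by exact_mod_cast h5)
    (card_edgeFinset_add_card_edgeFinset_compl G)
    (sq_card_edgeFinset_le G hG) (sq_card_edgeFinset_le Gᶜ hGc)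
    (cyclicity_le G hG hGc) (cyclicity_le Gᶜ hGc hGcc)
  rwa [sq_card_edgeFinset_eq_iff G hG, sq_card_edgeFinset_eq_iff Gᶜ hGc, Nat.cast_inj] at h
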